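/- Let d, t ∈ ℕ with d ≥ 4 and 1 ≤ t ≤ √d. Then for every ξ ∈ 𝕋^d one has |m_t(ξ) − s_t(ξ)| ≤ 2e · t²/d, where e is Euler's number. -/

import Mathlib

open Finset

noncomputable section

/-- The lattice points of the closed `l¹` ball of radius `t` in `ℤ^d`. -/
def latticeBall (d t : ℕ) : Finset (Fin d → ℤ) :=
  (Finset.Icc (fun _ => -(t : ℤ)) (fun _ => (t : ℤ))).filter fun y => ∑ i, |y i| ≤ (t : ℤ)

/-- `S_t = {x ∈ {-1,0,1}^d : Σ |x_i| = t}`. -/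
def sphereS (d t : ℕ) : Finset (Fin d → ℤ) :=
  (Finset.Icc (fun _ => (-1 : ℤ)) (fun _ => (1 : ℤ))).filter fun y => ∑ i, |y i| = (t : ℤ)

/-- `m_t(ξ) = |B_t ∩ ℤ^d|⁻¹ Σ_{x ∈ B_t ∩ ℤ^d} e(x·ξ)`, where `e(y) = e^{2πiy}`. -/
def mMul (d t : ℕ) (ξ : Fin d → ℝ) : ℂ :=
  ((latticeBall d t).card : ℂ)⁻¹ *
    ∑ x ∈ latticeBall d t, Complex.exp (2 * (Real.pi : ℂ) * Complex.I * ∑ k, (x k : ℂ) * (ξ k : ℂ))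

/-- `s_t(ξ) = |S_t|⁻¹ Σ_{x ∈ S_t} e(x·ξ)`, where `e(y) = e^{2πiy}`. -/
def sMul (d t : ℕ) (ξ : Fin d → ℝ) : ℂ :=
  ((sphereS d t).card : ℂ)⁻¹ *
    ∑ x ∈ sphereS d t, Complex.exp (2 * (Real.pi : ℂ) * Complex.I * ∑ k, (x k : ℂ) * (ξ k : ℂ))

/-! Both multipliers are averages of unimodular characters over nested sets `S_t ⊆ B_t`, so
`|m_t - s_t| ≤ 2 (|B_t| - |S_t|) / |B_t|`. A point of `B_t` is determined by its support, its
negative coordinates and the set of partial sums of `|x_i|` along its support, a subset of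
`{1, …, t}`; hence `|B_t| ≤ ∑ⱼ C(d,j) 2^j C(t,j)`, while `|S_t| ≥ 2^t C(d,t)`. The `(t-i)`-th
term is at most `X^i / i!` times the `t`-th one, with `X = t² / (2 (d - t + 1)) ≤ t²/d ≤ 1`, so
`|B_t| ≤ |S_t| e^X` and `e^X - 1 ≤ 2X ≤ e t²/d`. -/

theorem StrictMonoOn.eqOn_of_image_eq {α β : Type*} [LinearOrder α] [WellFoundedLT α]
    [Preorder β] {f g : α → β} {s : Set α} (hf : StrictMonoOn f s) (hg : StrictMonoOn g s)
    (h : f '' s = g '' s) : s.EqOn f g := by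
  have hfg := (hf.domRestrict.range_inj hg.domRestrict).mp
    (by simpa only [Set.range_domRestrict] using h)
  exact fun x hx => congrFun hfg ⟨x, hx⟩

theorem norm_average_sub_average_le {α 𝕜 : Type*} [RCLike 𝕜] {S B : Finset α} (hSB : S ⊆ B)
    (hS : S.Nonempty) (f : α → 𝕜) (hf : ∀ x, ‖f x‖ ≤ 1) :
    ‖(#B : 𝕜)⁻¹ * ∑ x ∈ B, f x - (#S : 𝕜)⁻¹ * ∑ x ∈ S, f x‖ ≤ 2 * (#B - #S) / #B := by
  classical
  have hS0 : (0 : ℝ) < #S := by exact_mod_cast hS.card_pos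
  have hSB' : (#S : ℝ) ≤ #B := by exact_mod_cast card_le_card hSB
  have hsum (F : Finset α) : ‖∑ x ∈ F, f x‖ ≤ #F :=
    (norm_sum_le _ _).trans (by simpa using sum_le_sum fun x _ => hf x)
  have hdiff : ‖∑ x ∈ B \ S, f x‖ ≤ #B - #S := by
    simpa [card_sdiff_of_subset hSB, Nat.cast_sub (card_le_card hSB)] using hsum (B \ S)
  have hsplit : (#B : 𝕜)⁻¹ * ∑ x ∈ B, f x - (#S : 𝕜)⁻¹ * ∑ x ∈ S, f x =
      (#B : 𝕜)⁻¹ * ∑ x ∈ B \ S, f x + (((#B : ℝ)⁻¹ - (#S : ℝ)⁻¹ : ℝ) : 𝕜) * ∑ x ∈ S, f x := by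
    rw [← sum_sdiff hSB]; push_cast; ring
  have hinv : (#B : ℝ)⁻¹ ≤ (#S : ℝ)⁻¹ := inv_anti₀ hS0 hSB'
  rw [hsplit]
  calc _ ≤ (#B : ℝ)⁻¹ * (#B - #S) + ((#S : ℝ)⁻¹ - (#B : ℝ)⁻¹) * #S := by
        refine (norm_add_le _ _).trans (add_le_add ?_ ?_)
        · rw [norm_mul, norm_inv, RCLike.norm_natCast]
          exact mul_le_mul_of_nonneg_left hdiff (by positivity)
        · rw [norm_mul, RCLike.norm_ofReal, abs_of_nonpos (sub_nonpos.mpr hinv), neg_sub]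
          exact mul_le_mul_of_nonneg_left (hsum S) (sub_nonneg.mpr hinv)
    _ = 2 * (#B - #S) / #B := by field_simp [(hS0.trans_le hSB').ne']; ring

theorem norm_exp_two_pi_I_mul_sum {d : ℕ} (x : Fin d → ℤ) (ξ : Fin d → ℝ) :
    ‖Complex.exp (2 * (Real.pi : ℂ) * Complex.I * ∑ k, (x k : ℂ) * (ξ k : ℂ))‖ = 1 := by
  simp [Complex.norm_exp, Complex.mul_re, Complex.mul_im]

theorem Real.exp_sub_one_le_exp_one_mul {x : ℝ} (hx0 : 0 ≤ x) (hx1 : x ≤ 1) :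
    Real.exp x - 1 ≤ Real.exp 1 * x := by
  have h2e : (2 : ℝ) ≤ Real.exp 1 := by linarith [Real.add_one_le_exp 1]
  calc Real.exp x - 1 ≤ 2 * |x| :=
        (abs_le.mp (Real.abs_exp_sub_one_le (by rwa [abs_of_nonneg hx0]))).2
    _ ≤ Real.exp 1 * x := by rw [abs_of_nonneg hx0]; exact mul_le_mul_of_nonneg_right h2e hx0

theorem sq_div_two_mul_sub_add_one_le {d t : ℝ} (hd : 0 < d) (htd : t ^ 2 ≤ d) :
    t ^ 2 / (2 * (d - t + 1)) ≤ t ^ 2 / d :=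
  -- `2t ≤ t² + 1 ≤ d + 1`
  div_le_div_of_nonneg_left (sq_nonneg t) hd (by nlinarith [sq_nonneg (t - 1)])

variable {d t : ℕ}

theorem mem_latticeBall {x : Fin d → ℤ} : x ∈ latticeBall d t ↔ ∑ i, |x i| ≤ t := by
  refine ⟨fun hx => (mem_filter.mp hx).2, fun hx => mem_filter.mpr ⟨?_, hx⟩⟩
  have hcoord (i : Fin d) : |x i| ≤ t :=
    (single_le_sum (fun l _ => abs_nonneg (x l)) (mem_univ i)).trans hx
  exact mem_Icc.mpr ⟨fun i => (abs_le.mp (hcoord i)).1, fun i => (abs_le.mp (hcoord i)).2⟩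

theorem sphereS_subset_latticeBall : sphereS d t ⊆ latticeBall d t :=
  fun _ hx => mem_latticeBall.mpr (mem_filter.mp hx).2.le

def signVector (s n : Finset (Fin d)) (i : Fin d) : ℤ :=
  if i ∈ n then -1 else if i ∈ s then 1 else 0

theorem filter_signVector_ne_zero {s n : Finset (Fin d)} (hn : n ⊆ s) :
    univ.filter (fun i => signVector s n i ≠ 0) = s := by
  ext i
  rw [mem_filter, signVector]
  by_cases hi : i ∈ n
  · simp [hi, hn hi]
  · by_cases hs : i ∈ s <;> simp [hi, hs]

theorem filter_signVector_neg (s n : Finset (Fin d)) :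
    univ.filter (fun i => signVector s n i < 0) = n := by
  ext i
  rw [mem_filter, signVector]
  by_cases hi : i ∈ n
  · simp [hi]
  · by_cases hs : i ∈ s <;> simp [hi, hs]

theorem two_pow_mul_choose_le_card_sphereS : 2 ^ t * d.choose t ≤ #(sphereS d t) := by
  classical
  have hcard : #((powersetCard t univ).sigma fun s : Finset (Fin d) => s.powerset) =
      2 ^ t * d.choose t := by
    rw [card_sigma, sum_congr rfl fun s hs => by rw [card_powerset, (mem_powersetCard.mp hs).2],
      sum_const, card_powersetCard, card_univ, Fintype.card_fin, smul_eq_mul, mul_comm]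
  rw [← hcard]
  refine card_le_card_of_injOn (fun p => signVector p.1 p.2) ?_ ?_
  · rintro ⟨s, n⟩ hp
    obtain ⟨hs, hn⟩ := mem_sigma.mp hp
    rw [mem_powersetCard] at hs
    rw [mem_powerset] at hn
    refine mem_filter.mpr ⟨mem_Icc.mpr ⟨fun i => ?_, fun i => ?_⟩, ?_⟩
    · dsimp only [signVector]; split_ifs <;> norm_num
    · dsimp only [signVector]; split_ifs <;> norm_num
    · have habs (i : Fin d) : |signVector s n i| = if i ∈ s then 1 else 0 := by
        unfold signVector; split_ifs <;> simp_all [subset_iff]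
      simp [habs, hs.2]
  · rintro ⟨s, n⟩ hp ⟨s', n'⟩ hp' h
    have hn : n ⊆ s := mem_powerset.mp (mem_sigma.mp hp).2
    have hn' : n' ⊆ s' := mem_powerset.mp (mem_sigma.mp hp').2
    have h : signVector s n = signVector s' n' := h
    have hss : s = s' := by
      rw [← filter_signVector_ne_zero hn, ← filter_signVector_ne_zero hn', h]
    have hnn : n = n' := by rw [← filter_signVector_neg s n, ← filter_signVector_neg s' n', h]
    subst hss hnn
    rfl

def absPrefixSum (x : Fin d → ℤ) (i : Fin d) : ℤ := ∑ l ∈ Iic i, |x l|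

theorem absPrefixSum_strictMonoOn (x : Fin d → ℤ) :
    StrictMonoOn (absPrefixSum x) {i | x i ≠ 0} := fun _ _ _ hj hij =>
  sum_lt_sum_of_subset (Iic_subset_Iic.mpr hij.le) (mem_Iic.mpr le_rfl)
    (fun h => hij.not_ge (mem_Iic.mp h)) (abs_pos.mpr hj) fun _ _ _ => abs_nonneg _

theorem abs_eq_abs_of_eqOn_absPrefixSum {x y : Fin d → ℤ} (h0 : ∀ i, x i = 0 ↔ y i = 0)
    (h : Set.EqOn (absPrefixSum x) (absPrefixSum y) {i | x i ≠ 0}) (i : Fin d) :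
    |x i| = |y i| := by
  induction i using WellFoundedLT.induction with
  | _ i ih =>
    by_cases hi : x i = 0
    · rw [hi, (h0 i).mp hi]
    have hsum := h hi
    simp only [absPrefixSum, ← Iio_insert, sum_insert notMem_Iio_self,
      sum_congr rfl fun l hl => ih l (mem_Iio.mp hl)] at hsum
    linarith

theorem absPrefixSum_mem_Icc {x : Fin d → ℤ} (hx : x ∈ latticeBall d t) {i : Fin d}
    (hi : x i ≠ 0) : absPrefixSum x i ∈ Icc (1 : ℤ) t :=
  mem_Icc.mpr ⟨(Int.one_le_abs hi).trans
      (single_le_sum (fun l _ => abs_nonneg (x l)) (mem_Iic.mpr le_rfl)),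
    (sum_le_sum_of_subset_of_nonneg (subset_univ _) fun l _ _ => abs_nonneg (x l)).trans
      (mem_latticeBall.mp hx)⟩

theorem eq_of_image_absPrefixSum_eq {x y : Fin d → ℤ} (h0 : ∀ i, x i = 0 ↔ y i = 0)
    (hneg : ∀ i, x i < 0 ↔ y i < 0)
    (himage : absPrefixSum x '' {i | x i ≠ 0} = absPrefixSum y '' {i | y i ≠ 0}) : x = y := by
  have hsupp : {i | x i ≠ 0} = {i | y i ≠ 0} := by ext i; simp [h0 i]
  have heqOn : Set.EqOn (absPrefixSum x) (absPrefixSum y) {i | x i ≠ 0} :=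
    (absPrefixSum_strictMonoOn x).eqOn_of_image_eq (hsupp ▸ absPrefixSum_strictMonoOn y)
      (hsupp ▸ himage)
  funext i
  rcases abs_eq_abs.mp (abs_eq_abs_of_eqOn_absPrefixSum h0 heqOn i) with h | h
  · exact h
  · have := hneg i; have := h0 i; omega

theorem card_latticeBall_le_sum :
    #(latticeBall d t) ≤ ∑ j ∈ range (d + 1), d.choose j * (2 ^ j * t.choose j) := by
  classical
  have hcard : #((univ : Finset (Fin d)).powerset.sigma fun s =>
      s.powerset ×ˢ (Icc (1 : ℤ) t).powersetCard #s) =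
      ∑ j ∈ range (d + 1), d.choose j * (2 ^ j * t.choose j) := by
    simp only [card_sigma, card_product, card_powerset, card_powersetCard, Int.card_Icc,
      add_sub_cancel_right, Int.toNat_natCast]
    rw [sum_powerset_apply_card (fun j => 2 ^ j * t.choose j), card_univ, Fintype.card_fin]
    rfl
  rw [← hcard]
  refine card_le_card_of_injOn (fun x => ⟨univ.filter (x · ≠ 0),
    (univ.filter (x · < 0), (univ.filter (x · ≠ 0)).image (absPrefixSum x))⟩) ?_ ?_
  · intro x hx
    have hmono : StrictMonoOn (absPrefixSum x) ↑(univ.filter (x · ≠ 0)) := by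
      simpa only [coe_filter, mem_univ, true_and] using absPrefixSum_strictMonoOn x
    refine mem_sigma.mpr ⟨mem_powerset.mpr (subset_univ _), mem_product.mpr
      ⟨mem_powerset.mpr (monotone_filter_right _ fun i _ hi => hi.ne), mem_powersetCard.mpr
        ⟨fun p hp => ?_, card_image_of_injOn hmono.injOn⟩⟩⟩
    obtain ⟨i, hi, rfl⟩ := mem_image.mp hp
    exact absPrefixSum_mem_Icc hx (mem_filter.mp hi).2
  · intro x _ y _ hxy
    simp only [Sigma.mk.injEq, Prod.mk.injEq, heq_eq_eq] at hxy
    obtain ⟨hsupp, hneg, himage⟩ := hxy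
    refine eq_of_image_absPrefixSum_eq (fun i => ?_) (fun i => ?_) ?_
    · simpa [not_iff_not] using congrArg (i ∈ ·) hsupp
    · simpa using congrArg (i ∈ ·) hneg
    · simpa using congrArg (fun F : Finset ℤ => (F : Set ℤ)) himage

theorem choose_sub_mul_pow_le_choose_mul_pow (htd : t ≤ d) {i : ℕ} (hit : i ≤ t) :
    d.choose (t - i) * (d - t + 1) ^ i ≤ d.choose t * t ^ i := by
  induction i with
  | zero => simp
  | succ i ih =>
    have hstep : d.choose (t - (i + 1)) * (d - t + 1) ≤ d.choose (t - i) * t := by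
      have hpascal := Nat.choose_succ_right_eq d (t - (i + 1))
      rw [show t - (i + 1) + 1 = t - i by omega] at hpascal
      calc d.choose (t - (i + 1)) * (d - t + 1)
          ≤ d.choose (t - (i + 1)) * (d - (t - (i + 1))) := Nat.mul_le_mul_left _ (by omega)
        _ = d.choose (t - i) * (t - i) := hpascal.symm
        _ ≤ d.choose (t - i) * t := Nat.mul_le_mul_left _ (Nat.sub_le t i)
    calc d.choose (t - (i + 1)) * (d - t + 1) ^ (i + 1)
        = d.choose (t - (i + 1)) * (d - t + 1) * (d - t + 1) ^ i := by ring
      _ ≤ d.choose (t - i) * t * (d - t + 1) ^ i := Nat.mul_le_mul_right _ hstep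
      _ = t * (d.choose (t - i) * (d - t + 1) ^ i) := by ring
      _ ≤ t * (d.choose t * t ^ i) := Nat.mul_le_mul_left _ (ih (by omega))
      _ = d.choose t * t ^ (i + 1) := by ring

theorem choose_sub_mul_two_pow_mul_choose_le (htd : t ≤ d) {i : ℕ} (hit : i ≤ t) :
    d.choose (t - i) * (2 ^ (t - i) * t.choose (t - i)) * ((2 * (d - t + 1)) ^ i * i.factorial)
      ≤ 2 ^ t * d.choose t * (t ^ 2) ^ i := by
  have hfact : t.choose (t - i) * i.factorial ≤ t ^ i := by
    rw [Nat.choose_symm hit, mul_comm, ← Nat.descFactorial_eq_factorial_mul_choose]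
    exact Nat.descFactorial_le_pow t i
  have hpow : 2 ^ (t - i) * 2 ^ i = 2 ^ t := by rw [← pow_add, Nat.sub_add_cancel hit]
  calc _ = 2 ^ (t - i) * 2 ^ i * (d.choose (t - i) * (d - t + 1) ^ i) *
        (t.choose (t - i) * i.factorial) := by rw [mul_pow]; ring
    _ ≤ 2 ^ (t - i) * 2 ^ i * (d.choose t * t ^ i) * t ^ i :=
      Nat.mul_le_mul (Nat.mul_le_mul_left _ (choose_sub_mul_pow_le_choose_mul_pow htd hit)) hfact
    _ = 2 ^ t * d.choose t * (t ^ 2) ^ i := by rw [hpow]; ring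

theorem card_latticeBall_le_mul_exp (htd : t ≤ d) :
    (#(latticeBall d t) : ℝ) ≤ 2 ^ t * d.choose t * Real.exp (t ^ 2 / (2 * (d - t + 1))) := by
  set X : ℝ := t ^ 2 / (2 * (d - t + 1))
  have hden : (0 : ℝ) < 2 * (d - t + 1) := by
    have : (t : ℝ) ≤ d := by exact_mod_cast htd
    linarith
  have hterm (i : ℕ) (hit : i ≤ t) :
      ((d.choose (t - i) * (2 ^ (t - i) * t.choose (t - i)) : ℕ) : ℝ) ≤
        2 ^ t * d.choose t * (X ^ i / i.factorial) := by
    have h : ((d.choose (t - i) * (2 ^ (t - i) * t.choose (t - i)) *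
        ((2 * (d - t + 1)) ^ i * i.factorial) : ℕ) : ℝ) ≤
        ((2 ^ t * d.choose t * (t ^ 2) ^ i : ℕ) : ℝ) := by
      exact_mod_cast choose_sub_mul_two_pow_mul_choose_le htd hit
    push_cast [Nat.cast_sub htd] at h ⊢
    rw [div_pow, div_div, mul_div_assoc', le_div_iff₀ (by positivity)]
    linarith
  have hreflect : ∑ j ∈ range (d + 1), d.choose j * (2 ^ j * t.choose j) =
      ∑ i ∈ range (t + 1), d.choose (t - i) * (2 ^ (t - i) * t.choose (t - i)) := by
    rw [← sum_subset (range_subset_range.mpr (by omega : t + 1 ≤ d + 1)) fun j _ hj => by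
      simp [Nat.choose_eq_zero_of_lt (by simpa using hj : t < j)], ← sum_range_reflect]
    simp
  calc (#(latticeBall d t) : ℝ)
      ≤ ∑ i ∈ range (t + 1), ((d.choose (t - i) * (2 ^ (t - i) * t.choose (t - i)) : ℕ) : ℝ) := by
        rw [← Nat.cast_sum, ← hreflect]; exact_mod_cast card_latticeBall_le_sum
    _ ≤ ∑ i ∈ range (t + 1), 2 ^ t * d.choose t * (X ^ i / i.factorial) :=
        sum_le_sum fun i hi => hterm i (Nat.lt_succ_iff.mp (mem_range.mp hi))
    _ ≤ 2 ^ t * d.choose t * Real.exp X := by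
        rw [← mul_sum]
        exact mul_le_mul_of_nonneg_left (Real.sum_le_exp_of_nonneg (by positivity) _)
          (by positivity)

theorem sphereS_nonempty (htd : t ≤ d) : (sphereS d t).Nonempty :=
  card_pos.mp <| (Nat.mul_pos (by positivity) (Nat.choose_pos htd)).trans_le
    two_pow_mul_choose_le_card_sphereS

theorem card_latticeBall_sub_card_sphereS_div_le (hd : 0 < d) (htd : t ^ 2 ≤ d) :
    ((#(latticeBall d t) : ℝ) - #(sphereS d t)) / #(latticeBall d t) ≤ Real.exp 1 * t ^ 2 / d := by
  have htd' : t ≤ d := (Nat.le_self_pow two_ne_zero t).trans htd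
  have hdR : (0 : ℝ) < d := by exact_mod_cast hd
  have htdR : (t : ℝ) ^ 2 ≤ d := by exact_mod_cast htd
  have hA : (2 ^ t * d.choose t : ℝ) ≤ #(sphereS d t) := by
    exact_mod_cast two_pow_mul_choose_le_card_sphereS
  have hSB : (#(sphereS d t) : ℝ) ≤ #(latticeBall d t) := by
    exact_mod_cast card_le_card sphereS_subset_latticeBall
  have hB : (0 : ℝ) < #(latticeBall d t) := by
    exact_mod_cast (sphereS_nonempty htd').card_pos.trans_le
      (card_le_card sphereS_subset_latticeBall)
  set X : ℝ := t ^ 2 / (2 * (d - t + 1))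
  have hX0 : 0 ≤ X := by
    have : (t : ℝ) ≤ d := by exact_mod_cast htd'
    exact div_nonneg (sq_nonneg _) (by linarith)
  have hXd : X ≤ t ^ 2 / d := sq_div_two_mul_sub_add_one_le hdR htdR
  have hexp : Real.exp X - 1 ≤ Real.exp 1 * (t ^ 2 / d) :=
    (Real.exp_sub_one_le_exp_one_mul hX0 (hXd.trans ((div_le_one hdR).mpr htdR))).trans
      (mul_le_mul_of_nonneg_left hXd (Real.exp_pos 1).le)
  rw [div_le_iff₀ hB, mul_div_assoc, mul_comm _ (#(latticeBall d t) : ℝ)]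
  calc (#(latticeBall d t) : ℝ) - #(sphereS d t)
      ≤ 2 ^ t * d.choose t * (Real.exp X - 1) := by
        linarith [card_latticeBall_le_mul_exp htd']
    _ ≤ #(latticeBall d t) * (Real.exp 1 * (t ^ 2 / d)) :=
        mul_le_mul (hA.trans hSB) hexp (sub_nonneg.mpr (Real.one_le_exp hX0))
          (Nat.cast_nonneg _)

theorem mMul_sub_sMul_bound_general (d t : ℕ) (hd : 4 ≤ d)
    (htd : (t : ℝ) ≤ Real.sqrt d) (ξ : Fin d → ℝ) :
    ‖mMul d t ξ - sMul d t ξ‖ ≤ 2 * Real.exp 1 * (t : ℝ) ^ 2 / d := by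
  have ht2 : t ^ 2 ≤ d := by
    exact_mod_cast (Real.le_sqrt (Nat.cast_nonneg t) (Nat.cast_nonneg d)).mp htd
  calc ‖mMul d t ξ - sMul d t ξ‖
      ≤ 2 * ((#(latticeBall d t) - #(sphereS d t)) / #(latticeBall d t)) := by
        rw [← mul_div_assoc]
        exact norm_average_sub_average_le sphereS_subset_latticeBall
          (sphereS_nonempty ((Nat.le_self_pow two_ne_zero t).trans ht2)) _
          fun x => (norm_exp_two_pi_I_mul_sum x ξ).le
    _ ≤ 2 * (Real.exp 1 * t ^ 2 / d) :=
        mul_le_mul_of_nonneg_left (card_latticeBall_sub_card_sphereS_div_le (by omega) ht2)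
          zero_le_two
    _ = 2 * Real.exp 1 * (t : ℝ) ^ 2 / d := by ring

/-- Corollary 2.5: for `d ≥ 4`, `1 ≤ t ≤ √d` and any `ξ ∈ 𝕋^d`,
`|m_t(ξ) - s_t(ξ)| ≤ 2e · t²/d`. -/
theorem mMul_sub_sMul_bound (d t : ℕ) (hd : 4 ≤ d) (ht : 1 ≤ t)
    (htd : (t : ℝ) ≤ Real.sqrt d) (ξ : Fin d → ℝ) :
    ‖mMul d t ξ - sMul d t ξ‖ ≤ 2 * Real.exp 1 * (t : ℝ) ^ 2 / d :=
  mMul_sub_sMul_bound_general d t hd htd ξ
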